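/- Monotone improvement of the Blahut–Arimoto iteration: let W be a discrete memoryless channel with finite alphabets 𝒳, 𝒴 and W(y|x) > 0 for all x, y, and let p be an input pmf with p(x) > 0 for all x. Define c(x) = exp( Σ_y W(y|x) log( W(y|x) / (pW)(y) ) ) and the updated pmf p'(x) = p(x)c(x) / Σ_{x'} p(x')c(x'). Then p' is a valid pmf and I(p', W) ≥ I(p, W). -/

import Mathlib

/-!
Write `q = pW`, `c(x) = exp D(W(·|x) ‖ q)` and `Z = Σ p c`. Since `I(p, W) = Σ p log c`, Jensen's
inequality gives `I(p, W) ≤ log Z`. Conversely, `I(p', W)` dominates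
`Σ p'(x) W(y|x) log (Φ(x|y) / p'(x))` for every backward channel `Φ` (Gibbs' inequality on
`𝒳 × 𝒴`); for the backward channel `Φ(x|y) = p(x) W(y|x) / q(y)` of `p` this sum is exactly
`log Z`, because `p'(x) / p(x) = c(x) / Z`.
-/

open scoped BigOperators

noncomputable def mutualInfo {X Y : Type*} [Fintype X] [Fintype Y]
    (p : X → ℝ) (W : X → Y → ℝ) : ℝ :=
  ∑ x, ∑ y, p x * W x y * Real.log (W x y / ∑ x', p x' * W x' y)

open Real Finset

lemma mul_log_div_le_sub {a b : ℝ} (ha : 0 ≤ a) (hb : 0 < b) : a * log (b / a) ≤ b - a := by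
  rcases ha.eq_or_lt with rfl | ha
  · simpa using hb.le
  · calc a * log (b / a) ≤ a * (b / a - 1) :=
          mul_le_mul_of_nonneg_left (log_le_sub_one_of_pos (div_pos hb ha)) ha.le
      _ = b - a := by field_simp

/-- Gibbs' inequality, for weights of total mass `∑ b ≤ ∑ a` that need not be normalised. -/
lemma sum_mul_log_div_nonpos {ι : Type*} [Fintype ι] {a b : ι → ℝ} (ha : ∀ i, 0 ≤ a i)
    (hb : ∀ i, 0 < b i) (hab : ∑ i, b i ≤ ∑ i, a i) : ∑ i, a i * log (b i / a i) ≤ 0 :=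
  (sum_le_sum fun i _ => mul_log_div_le_sub (ha i) (hb i)).trans <| by
    rw [sum_sub_distrib]; linarith

lemma sum_mul_le_log_sum_mul_exp {ι : Type*} [Fintype ι] {w : ι → ℝ} (hw0 : ∀ i, 0 ≤ w i)
    (hw1 : ∑ i, w i = 1) (f : ι → ℝ) : ∑ i, w i * f i ≤ log (∑ i, w i * exp (f i)) := by
  rw [← exp_le_exp, exp_log]
  · exact convexOn_exp.map_sum_le (fun i _ => hw0 i) hw1 (fun i _ => Set.mem_univ _)
  · obtain ⟨i, -, hi⟩ := exists_ne_zero_of_sum_ne_zero (hw1.trans_ne one_ne_zero)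
    exact sum_pos' (fun j _ => mul_nonneg (hw0 j) (exp_pos _).le)
      ⟨i, mem_univ _, mul_pos ((hw0 i).lt_of_ne' hi) (exp_pos _)⟩

section Channel

variable {X Y : Type*} [Fintype X] [Fintype Y]

noncomputable def relEntropy (r q : Y → ℝ) : ℝ := ∑ y, r y * log (r y / q y)

def outputDist (p : X → ℝ) (W : X → Y → ℝ) (y : Y) : ℝ := ∑ x, p x * W x y

variable {p : X → ℝ} {W : X → Y → ℝ}

lemma mutualInfo_eq_sum_mul_relEntropy :
    mutualInfo p W = ∑ x, p x * relEntropy (W x) (outputDist p W) := by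
  simp only [mutualInfo, relEntropy, outputDist, mul_sum, mul_assoc]

omit [Fintype Y] in
lemma outputDist_pos [Nonempty X] (hp : ∀ x, 0 < p x) (hW : ∀ x y, 0 < W x y) (y : Y) :
    0 < outputDist p W y :=
  sum_pos (fun x _ => mul_pos (hp x) (hW x y)) univ_nonempty

/-- The variational lower bound on mutual information over backward channels `Φ(x|y)`. -/
theorem sum_mul_log_le_mutualInfo [Nonempty X] (hp : ∀ x, 0 < p x) (hW : ∀ x y, 0 < W x y)
    {Φ : Y → X → ℝ} (hΦ : ∀ y x, 0 < Φ y x) (hΦ1 : ∀ y, ∑ x, Φ y x ≤ 1) :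
    ∑ x, ∑ y, p x * W x y * log (Φ y x / p x) ≤ mutualInfo p W := by
  have hq := outputDist_pos hp hW
  have hmass :
      ∑ i : X × Y, outputDist p W i.2 * Φ i.2 i.1 ≤ ∑ i : X × Y, p i.1 * W i.1 i.2 := by
    simp only [Fintype.sum_prod_type_right]
    refine sum_le_sum fun y _ => ?_
    rw [← mul_sum]
    exact mul_le_of_le_one_right (hq y).le (hΦ1 y)
  have hgibbs := sum_mul_log_div_nonpos (fun i : X × Y => (mul_pos (hp i.1) (hW i.1 i.2)).le)
    (fun i => mul_pos (hq i.2) (hΦ i.2 i.1)) hmass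
  have hlog : ∀ x y, log (outputDist p W y * Φ y x / (p x * W x y))
      = log (Φ y x / p x) - log (W x y / outputDist p W y) := fun x y => by
    rw [← log_div (div_pos (hΦ y x) (hp x)).ne' (div_pos (hW x y) (hq y)).ne']
    congr 1
    field_simp
  simp only [Fintype.sum_prod_type, hlog, mul_sub, sum_sub_distrib] at hgibbs
  exact sub_nonpos.mp hgibbs

namespace BlahutArimoto

noncomputable def weight (p : X → ℝ) (W : X → Y → ℝ) (x : X) : ℝ :=
  exp (relEntropy (W x) (outputDist p W))

noncomputable def update (p : X → ℝ) (W : X → Y → ℝ) (x : X) : ℝ :=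
  p x * weight p W x / ∑ x', p x' * weight p W x'

lemma weight_pos (x : X) : 0 < weight p W x := exp_pos _

lemma sum_mul_weight_pos [Nonempty X] (hp : ∀ x, 0 < p x) : 0 < ∑ x, p x * weight p W x :=
  sum_pos (fun x _ => mul_pos (hp x) (weight_pos x)) univ_nonempty

lemma update_pos [Nonempty X] (hp : ∀ x, 0 < p x) (x : X) : 0 < update p W x :=
  div_pos (mul_pos (hp x) (weight_pos x)) (sum_mul_weight_pos hp)

lemma sum_update [Nonempty X] (hp : ∀ x, 0 < p x) : ∑ x, update p W x = 1 := by
  simp only [update, ← sum_div]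
  exact div_self (sum_mul_weight_pos hp).ne'

lemma div_update {x : X} (hx : 0 < p x) :
    p x / update p W x = (∑ x', p x' * weight p W x') / weight p W x := by
  rw [update]
  field_simp [hx.ne', (weight_pos (p := p) (W := W) x).ne']

lemma mutualInfo_le_log_sum_mul_weight (hp0 : ∀ x, 0 ≤ p x) (hp1 : ∑ x, p x = 1) :
    mutualInfo p W ≤ log (∑ x, p x * weight p W x) := by
  rw [mutualInfo_eq_sum_mul_relEntropy]
  exact sum_mul_le_log_sum_mul_exp hp0 hp1 _

lemma log_sum_mul_weight_le_mutualInfo_update [Nonempty X] (hp : ∀ x, 0 < p x)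
    (hW : ∀ x y, 0 < W x y) (hW1 : ∀ x, ∑ y, W x y = 1) :
    log (∑ x, p x * weight p W x) ≤ mutualInfo (update p W) W := by
  set Z := ∑ x, p x * weight p W x
  have hq := outputDist_pos hp hW
  have hZ : 0 < Z := sum_mul_weight_pos hp
  have hΦ1 : ∀ y, ∑ x, p x * W x y / outputDist p W y ≤ 1 := fun y =>
    (sum_div _ _ _).symm.trans_le (div_self (hq y).ne').le
  refine le_of_eq_of_le ?_ (sum_mul_log_le_mutualInfo (update_pos hp) hW
    (fun y x => div_pos (mul_pos (hp x) (hW x y)) (hq y)) hΦ1)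
  have hlog : ∀ x y, log (p x * W x y / outputDist p W y / update p W x)
      = log (W x y / outputDist p W y) + (log Z - relEntropy (W x) (outputDist p W)) :=
    fun x y => by
    rw [show p x * W x y / outputDist p W y / update p W x
        = W x y / outputDist p W y * (p x / update p W x) by ring, div_update (hp x),
      log_mul (div_pos (hW x y) (hq y)).ne' (div_pos hZ (weight_pos x)).ne',
      log_div hZ.ne' (weight_pos x).ne', weight, log_exp]
  have hrow : ∀ x, ∑ y, update p W x * W x y
      * (log (W x y / outputDist p W y) + (log Z - relEntropy (W x) (outputDist p W)))
      = update p W x * log Z := fun x => by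
    simp only [mul_add, sum_add_distrib, mul_assoc, ← mul_sum, ← sum_mul, hW1]
    rw [relEntropy]
    ring
  simp only [hlog, hrow, ← sum_mul, sum_update hp, one_mul]

end BlahutArimoto

end Channel

/-- Monotone improvement of the Blahut–Arimoto iteration: for a discrete
memoryless channel `W` with `W(y|x) > 0` everywhere and a strictly positive
input pmf `p`, setting `c(x) = exp(Σ_y W(y|x) log(W(y|x)/(pW)(y)))` and
`p'(x) = p(x)c(x) / Σ_{x'} p(x')c(x')`, the update `p'` is a valid pmf and
`I(p', W) ≥ I(p, W)`. -/
theorem blahutArimoto_step_improves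
    {X Y : Type*} [Fintype X] [Fintype Y] [Nonempty X]
    (W : X → Y → ℝ)
    (hWpos : ∀ x y, 0 < W x y) (hW1 : ∀ x, ∑ y, W x y = 1)
    (p : X → ℝ)
    (hp0 : ∀ x, 0 < p x) (hp1 : ∑ x, p x = 1)
    (c p' : X → ℝ)
    (hc : c = fun x => Real.exp (∑ y, W x y * Real.log (W x y / ∑ x', p x' * W x' y)))
    (hp' : p' = fun x => p x * c x / ∑ x', p x' * c x') :
    (∀ x, 0 ≤ p' x) ∧ (∑ x, p' x = 1) ∧ mutualInfo p W ≤ mutualInfo p' W := by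
  subst hc hp'
  exact ⟨fun x => (BlahutArimoto.update_pos hp0 x).le, BlahutArimoto.sum_update hp0,
    (BlahutArimoto.mutualInfo_le_log_sum_mul_weight (fun x => (hp0 x).le) hp1).trans
      (BlahutArimoto.log_sum_mul_weight_le_mutualInfo_update hp0 hWpos hW1)⟩
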